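/- Let C be a complete lattice and let f : C → ℘◇(C) be an EM-monotone multivalued function (each value f(c) contains both its infimum and its supremum). Then f has both a least and a greatest fixed point, with lfp(f) = ⋁_{α ∈ Ord} f∧^α(⊥) and gfp(f) = ⋀_{α ∈ Ord} f∨^α(⊤), where f∧(c) = ⋀ f(c) and f∨(c) = ⋁ f(c). -/

import Mathlib

universe u

/-- Smyth preorder on subsets. -/
def SmythLE {β : Type u} [LE β] (X Y : Set β) : Prop := ∀ y ∈ Y, ∃ x ∈ X, x ≤ y

/-- Hoare preorder on subsets. -/
def HoareLE {β : Type u} [LE β] (X Y : Set β) : Prop := ∀ x ∈ X, ∃ y ∈ Y, x ≤ y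

/-- Egli-Milner preorder on subsets. -/
def EgliMilnerLE {β : Type u} [LE β] (X Y : Set β) : Prop := SmythLE X Y ∧ HoareLE X Y

/-- Upward transfinite iterates of `g` starting from `⊥` (suprema at limits). -/
noncomputable def upIter {β : Type u} [CompleteLattice β] (g : β → β) (o : Ordinal.{u}) : β :=
  Ordinal.limitRecOn (motive := fun _ => β) o ⊥ (fun _ ih => g ih)
    (fun o _ ih => ⨆ b : Set.Iio o, ih b.1 b.2)

/-- Downward transfinite iterates of `g` starting from `⊤` (infima at limits). -/
noncomputable def downIter {β : Type u} [CompleteLattice β] (g : β → β) (o : Ordinal.{u}) : β :=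
  Ordinal.limitRecOn (motive := fun _ => β) o ⊤ (fun _ ih => g ih)
    (fun o _ ih => ⨅ b : Set.Iio o, ih b.1 b.2)

/-!
Smyth-monotonicity of `f` makes `f∧ = sInf ∘ f` monotone and Hoare-monotonicity makes
`f∨ = sSup ∘ f` monotone. Since `f∧ c ∈ f c`, every fixed point of `f∧` is a fixed point of `f`,
while every fixed point `x ∈ f x` satisfies `f∧ x ≤ x`; hence the least fixed point of `f∧`
(Tarski), which the transfinite iteration from `⊥` reaches (Cousot–Cousot), is the least fixed
point of `f`. Dually for `f∨` and the greatest fixed point.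
-/

open Ordinal OrdinalApprox

section Iterates

variable {β : Type u} [CompleteLattice β]

theorem upIter_eq_lfpApprox (g : β →o β) (o : Ordinal.{u}) : upIter g o = lfpApprox g ⊥ o := by
  induction o using Ordinal.limitRecOn with
  | zero => exact (limitRecOn_zero ..).trans (lfpApprox_zero g).symm
  | add_one o ih =>
    rw [upIter, limitRecOn_add_one, ← upIter, ih, lfpApprox_add_one g bot_le]
  | limit o ho ih =>
    rw [upIter, limitRecOn_limit _ _ _ _ ho, lfpApprox_of_isSuccLimit g ho]
    exact iSup_congr fun b => ih b.1 b.2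

theorem iSup_upIter_eq_lfp (g : β →o β) : ⨆ o : Ordinal.{u}, upIter g o = g.lfp := by
  simp_rw [upIter_eq_lfpApprox]
  rw [iSup_lfpApprox_eq_of_mem_fixedPoints g (lfpApprox_ord_mem_fixedPoint g bot_le),
    lfpApprox_ord_eq_lfp]

theorem iInf_downIter_eq_gfp (g : β →o β) : ⨅ o : Ordinal.{u}, downIter g o = g.gfp :=
  iSup_upIter_eq_lfp (β := βᵒᵈ) g.dual

end Iterates

theorem SmythLE.sInf_le_sInf {β : Type u} [CompleteSemilatticeInf β] {X Y : Set β}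
    (h : SmythLE X Y) : sInf X ≤ sInf Y :=
  sInf_le_sInf_of_isCoinitialFor fun y hy => h y hy

theorem HoareLE.sSup_le_sSup {β : Type u} [CompleteSemilatticeSup β] {X Y : Set β}
    (h : HoareLE X Y) : sSup X ≤ sSup Y :=
  sSup_le_sSup_of_isCofinalFor fun x hx => h x hx

section MultivaluedFixedPoints

variable {β : Type u} [CompleteLattice β] {f : β → Set β}

theorem isLeast_mem_self_lfp (hmeet : ∀ c, sInf (f c) ∈ f c)
    (hmono : Monotone fun c => sInf (f c)) :
    IsLeast {x | x ∈ f x} (OrderHom.lfp ⟨fun c => sInf (f c), hmono⟩) :=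
  ⟨(OrderHom.map_lfp ⟨_, hmono⟩).subst (motive := fun a => a ∈ f _) (hmeet _),
    fun _ hx => OrderHom.lfp_le _ (sInf_le hx)⟩

theorem isGreatest_mem_self_gfp (hjoin : ∀ c, sSup (f c) ∈ f c)
    (hmono : Monotone fun c => sSup (f c)) :
    IsGreatest {x | x ∈ f x} (OrderHom.gfp ⟨fun c => sSup (f c), hmono⟩) :=
  ⟨(OrderHom.map_gfp ⟨_, hmono⟩).subst (motive := fun a => a ∈ f _) (hjoin _),
    fun _ hx => OrderHom.le_gfp _ (le_sSup hx)⟩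

end MultivaluedFixedPoints

/-- an EM-monotone multivalued function `f : C → ℘◇(C)` on a complete
lattice has both a least and a greatest fixed point, with
`lfp(f) = ⋁_{α ∈ Ord} f∧^α(⊥)` and `gfp(f) = ⋀_{α ∈ Ord} f∨^α(⊤)`,
where `f∧ c = ⋀ f c` and `f∨ c = ⋁ f c`. -/
theorem multivalued_lfp_and_gfp {β : Type u} [CompleteLattice β] (f : β → Set β)
    (hmeet : ∀ c, sInf (f c) ∈ f c) (hjoin : ∀ c, sSup (f c) ∈ f c)
    (hmono : ∀ x y : β, x ≤ y → EgliMilnerLE (f x) (f y)) :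
    IsLeast {x | x ∈ f x} (⨆ o : Ordinal.{u}, upIter (fun c => sInf (f c)) o) ∧
    IsGreatest {x | x ∈ f x} (⨅ o : Ordinal.{u}, downIter (fun c => sSup (f c)) o) := by
  have hmeet_mono : Monotone fun c => sInf (f c) := fun x y hxy =>
    (hmono x y hxy).1.sInf_le_sInf
  have hjoin_mono : Monotone fun c => sSup (f c) := fun x y hxy =>
    (hmono x y hxy).2.sSup_le_sSup
  exact ⟨iSup_upIter_eq_lfp ⟨_, hmeet_mono⟩ ▸ isLeast_mem_self_lfp hmeet hmeet_mono,
    iInf_downIter_eq_gfp ⟨_, hjoin_mono⟩ ▸ isGreatest_mem_self_gfp hjoin hjoin_mono⟩
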